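/- For a nonzero generalized Euclidean distance matrix D, the following are equivalent: (a) 1'D†1 ≠ 0; (b) null(D) = null(D') = null(L) ∩ 1⊥. -/

import Mathlib

/-!
Write `ℓ = diag L`; a GEDM acts by `D x = a² (1ᵀx) ℓ + b² (ℓᵀx) 1 - 2ab L x`. Since `1ᵀ L = 0`,
`D x = 0` gives `a² (tr L) (1ᵀx) + b² n (ℓᵀx) = 0` and
`(a² + b²) (1ᵀx)(ℓᵀx) = 2ab xᵀLx ≥ 0`; as `tr L > 0` this forces
`null D = null L ∩ 1⊥ ∩ ℓ⊥`, and the same holds for `Dᵀ`, the GEDM with `a` and `b` swapped.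
So (b) says that `ℓ ⊥ null L ∩ 1⊥`. If some `x ∈ null L ∩ 1⊥` has `ℓᵀx ≠ 0`, then `D x` and
`Dᵀ x` are nonzero multiples of `1`, and `0 = xᵀ D x = (Dᵀ x)ᵀ D† (D x)` forces `1ᵀ D† 1 = 0`.
Conversely, when `null D = null Dᵀ` the vector `y = D† 1` satisfies `yᵀ D y = yᵀ 1`; if this
vanishes then `yᵀ L y = 0`, so `y ∈ null D` by (b), hence `Dᵀ 1 = Dᵀ D D† 1 = 0` and
`1 ∈ null D ⊆ 1⊥`, which is absurd.
-/

open Matrix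

/-- `Dp` is the Moore-Penrose inverse of `D`. -/
def IsMoorePenrose {n : ℕ} (D Dp : Matrix (Fin n) (Fin n) ℝ) : Prop :=
  D * Dp * D = D ∧ Dp * D * Dp = Dp ∧ (D * Dp)ᵀ = D * Dp ∧ (Dp * D)ᵀ = Dp * D

section GEDM

variable {ι : Type*} [Fintype ι]

def gedm (a b : ℝ) (L : Matrix ι ι ℝ) : Matrix ι ι ℝ :=
  of fun i j => a ^ 2 * L i i + b ^ 2 * L j j - 2 * a * b * L i j

variable {a b : ℝ} {L : Matrix ι ι ℝ}

omit [Fintype ι] in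
theorem gedm_transpose (hL : L.IsSymm) : (gedm a b L)ᵀ = gedm b a L := by
  ext i j
  simp only [gedm, transpose_apply, of_apply, hL.apply i j]
  ring

theorem gedm_mulVec (x : ι → ℝ) :
    gedm a b L *ᵥ x =
      (a ^ 2 * (1 ⬝ᵥ x)) • diag L + (b ^ 2 * (diag L ⬝ᵥ x)) • 1 - (2 * a * b) • L *ᵥ x := by
  ext i
  calc ∑ j, gedm a b L i j * x j
      = ∑ j, (a ^ 2 * L i i * x j + b ^ 2 * (L j j * x j) - 2 * a * b * (L i j * x j)) :=
        Finset.sum_congr rfl fun j _ => by simp only [gedm, of_apply]; ring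
    _ = _ := by
        simp only [Finset.sum_sub_distrib, Finset.sum_add_distrib, ← Finset.mul_sum, mulVec,
          dotProduct, Pi.sub_apply, Pi.add_apply, Pi.smul_apply,
          smul_eq_mul, diag_apply, Pi.one_apply]
        ring

theorem dotProduct_gedm_mulVec_self (x : ι → ℝ) :
    x ⬝ᵥ gedm a b L *ᵥ x =
      (a ^ 2 + b ^ 2) * ((1 ⬝ᵥ x) * (diag L ⬝ᵥ x)) - 2 * a * b * (x ⬝ᵥ L *ᵥ x) := by
  rw [gedm_mulVec, dotProduct_sub, dotProduct_add, dotProduct_smul, dotProduct_smul,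
    dotProduct_smul, dotProduct_comm x (diag L), dotProduct_comm x 1]
  simp only [smul_eq_mul]
  ring

theorem one_dotProduct_gedm_mulVec (hL1 : 1 ᵥ* L = 0) (x : ι → ℝ) :
    1 ⬝ᵥ gedm a b L *ᵥ x =
      a ^ 2 * L.trace * (1 ⬝ᵥ x) + b ^ 2 * Fintype.card ι * (diag L ⬝ᵥ x) := by
  rw [gedm_mulVec, dotProduct_sub, dotProduct_add, dotProduct_smul, dotProduct_smul,
    dotProduct_smul, dotProduct_mulVec, hL1, one_dotProduct_one, one_dotProduct (diag L)]
  simp only [smul_eq_mul, zero_dotProduct, trace]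
  ring

theorem gedm_mulVec_eq_zero_iff (hL : L.PosSemidef) (hL1 : 1 ᵥ* L = 0) (hτ : 0 < L.trace)
    (ha : 0 < a) (hb : 0 < b) (x : ι → ℝ) :
    gedm a b L *ᵥ x = 0 ↔ L *ᵥ x = 0 ∧ 1 ⬝ᵥ x = 0 ∧ diag L ⬝ᵥ x = 0 := by
  refine ⟨fun hx => ?_, fun ⟨hLx, hS, hT⟩ => by simp [gedm_mulVec, hLx, hS, hT]⟩
  have : Nonempty ι := by
    by_contra h
    simp [not_nonempty_iff.mp h, trace] at hτ
  have hn : (0 : ℝ) < Fintype.card ι := by exact_mod_cast Fintype.card_pos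
  have hsum := one_dotProduct_gedm_mulVec (a := a) (b := b) hL1 x
  have hquad := dotProduct_gedm_mulVec_self (a := a) (b := b) (L := L) x
  rw [hx, dotProduct_zero] at hsum hquad
  have hq : 0 ≤ x ⬝ᵥ L *ᵥ x := by simpa using hL.dotProduct_mulVec_nonneg x
  set S := 1 ⬝ᵥ x
  set T := diag L ⬝ᵥ x
  set q := x ⬝ᵥ L *ᵥ x
  have hST : S * T = 0 := by
    have hneg : b ^ 2 * Fintype.card ι * (S * T) = -(a ^ 2 * L.trace * S ^ 2) := by
      linear_combination -S * hsum
    have hbn : 0 < b ^ 2 * Fintype.card ι := by positivity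
    have hab : 0 < a ^ 2 + b ^ 2 := by positivity
    have hτS : 0 ≤ a ^ 2 * L.trace * S ^ 2 := by positivity
    refine le_antisymm ?_ ?_
    · nlinarith
    · nlinarith [mul_nonneg (mul_pos ha hb).le hq]
  have hq0 : q = 0 := by
    rw [hST, mul_zero, zero_sub, zero_eq_neg] at hquad
    simpa [ha.ne', hb.ne'] using hquad
  have hS : S = 0 := by
    have : a ^ 2 * L.trace * S ^ 2 = 0 := by
      linear_combination -S * hsum - b ^ 2 * Fintype.card ι * hST
    simpa [ha.ne', hτ.ne'] using this
  have hT : T = 0 := by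
    rw [hS, mul_zero, zero_add, zero_eq_mul] at hsum
    simpa [hb.ne', hn.ne'] using hsum
  exact ⟨(hL.dotProduct_mulVec_zero_iff x).mp (by simpa using hq0), hS, hT⟩

end GEDM

namespace IsMoorePenrose

variable {n : ℕ} {D Dp : Matrix (Fin n) (Fin n) ℝ}

theorem transpose_mul_mul_pinv (h : IsMoorePenrose D Dp) : Dᵀ * (D * Dp) = Dᵀ := by
  conv_lhs => rw [← h.2.2.1, ← transpose_mul, h.1]

theorem pinv_transpose_mul_pinv_mul (h : IsMoorePenrose D Dp) : Dpᵀ * (Dp * D) = Dpᵀ := by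
  conv_lhs => rw [← h.2.2.2, ← transpose_mul, h.2.1]

theorem transpose_mulVec_eq_zero_of_mulVec_pinv_mulVec_eq_zero (h : IsMoorePenrose D Dp)
    {v : Fin n → ℝ} (hv : D *ᵥ Dp *ᵥ v = 0) : Dᵀ *ᵥ v = 0 := by
  rw [← h.transpose_mul_mul_pinv, ← mulVec_mulVec, ← mulVec_mulVec, hv, mulVec_zero]

theorem transpose_mulVec_dotProduct_pinv_mulVec (h : IsMoorePenrose D Dp) (x : Fin n → ℝ) :
    (Dᵀ *ᵥ x) ⬝ᵥ Dp *ᵥ D *ᵥ x = x ⬝ᵥ D *ᵥ x := by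
  rw [mulVec_transpose, ← dotProduct_mulVec, mulVec_mulVec, mulVec_mulVec, h.1]

/-- `v - D Dp v` lies in `ker Dᵀ ⊆ ker D`, hence is orthogonal to the range of `Dp`. -/
theorem pinv_mulVec_dotProduct_mulVec_pinv_mulVec (h : IsMoorePenrose D Dp)
    (hEP : ∀ x, Dᵀ *ᵥ x = 0 → D *ᵥ x = 0) (v : Fin n → ℝ) :
    (Dp *ᵥ v) ⬝ᵥ D *ᵥ Dp *ᵥ v = (Dp *ᵥ v) ⬝ᵥ v := by
  have hDρ : D *ᵥ (v - D *ᵥ Dp *ᵥ v) = 0 := by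
    refine hEP _ ?_
    rw [mulVec_sub, mulVec_mulVec, mulVec_mulVec, Matrix.mul_assoc, h.transpose_mul_mul_pinv,
      sub_self]
  have hρ : (Dp *ᵥ v) ⬝ᵥ (v - D *ᵥ Dp *ᵥ v) = 0 := by
    rw [dotProduct_comm, dotProduct_mulVec, ← mulVec_transpose, ← h.pinv_transpose_mul_pinv_mul,
      ← mulVec_mulVec, ← mulVec_mulVec, hDρ, mulVec_zero, mulVec_zero, zero_dotProduct]
  rwa [dotProduct_sub, sub_eq_zero, eq_comm] at hρ

theorem one_dotProduct_mulVec_one_eq_zero_of_gedm {a b : ℝ} {L : Matrix (Fin n) (Fin n) ℝ}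
    (h : IsMoorePenrose (gedm a b L) Dp) (hL : L.IsSymm) (ha : a ≠ 0) (hb : b ≠ 0)
    {x : Fin n → ℝ} (hLx : L *ᵥ x = 0) (hS : 1 ⬝ᵥ x = 0) (hT : diag L ⬝ᵥ x ≠ 0) :
    1 ⬝ᵥ Dp *ᵥ 1 = 0 := by
  have hDx : gedm a b L *ᵥ x = (b ^ 2 * (diag L ⬝ᵥ x)) • 1 := by
    simp [gedm_mulVec, hLx, hS]
  have hDTx : (gedm a b L)ᵀ *ᵥ x = (a ^ 2 * (diag L ⬝ᵥ x)) • 1 := by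
    simp [gedm_transpose hL, gedm_mulVec, hLx, hS]
  have key := h.transpose_mulVec_dotProduct_pinv_mulVec x
  rw [hDx, hDTx, mulVec_smul, smul_dotProduct, dotProduct_smul, dotProduct_smul,
    dotProduct_comm x 1, hS] at key
  simpa [ha, hb, hT] using key

theorem one_dotProduct_mulVec_one_ne_zero_of_gedm {a b : ℝ} {L : Matrix (Fin n) (Fin n) ℝ}
    (h : IsMoorePenrose (gedm a b L) Dp) (hL : L.PosSemidef) (ha : 0 < a) (hb : 0 < b)
    (hn : n ≠ 0) (hEP : ∀ x, (gedm a b L)ᵀ *ᵥ x = 0 → gedm a b L *ᵥ x = 0)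
    (hnull : ∀ x, gedm a b L *ᵥ x = 0 ↔ L *ᵥ x = 0 ∧ 1 ⬝ᵥ x = 0) :
    1 ⬝ᵥ Dp *ᵥ 1 ≠ 0 := by
  intro h0
  set y := Dp *ᵥ 1
  have hquad : y ⬝ᵥ gedm a b L *ᵥ y = 0 := by
    rw [h.pinv_mulVec_dotProduct_mulVec_pinv_mulVec hEP, dotProduct_comm, h0]
  rw [dotProduct_gedm_mulVec_self, h0, zero_mul, mul_zero, zero_sub, neg_eq_zero] at hquad
  have hLy : L *ᵥ y = 0 :=
    (hL.dotProduct_mulVec_zero_iff y).mp (by simpa [ha.ne', hb.ne'] using hquad)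
  have hDT1 : (gedm a b L)ᵀ *ᵥ 1 = 0 :=
    h.transpose_mulVec_eq_zero_of_mulVec_pinv_mulVec_eq_zero ((hnull y).mpr ⟨hLy, h0⟩)
  have h11 := ((hnull 1).mp (hEP 1 hDT1)).2
  simp [hn] at h11

end IsMoorePenrose

/-- For a nonzero GEDM `D`: `1ᵀ D† 1 ≠ 0` iff
`null(D) = null(Dᵀ) = null(L) ∩ 1ᗮ`. -/
theorem stmt10 (n : ℕ) (L D : Matrix (Fin n) (Fin n) ℝ) (hL : L.PosSemidef)
    (hL1 : L *ᵥ (fun _ => (1 : ℝ)) = 0) (hL0 : L ≠ 0)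
    (a b : ℝ) (ha : 0 < a) (hb : 0 < b)
    (hD : ∀ i j, D i j = a ^ 2 * L i i + b ^ 2 * L j j - 2 * a * b * L i j)
    (Dp : Matrix (Fin n) (Fin n) ℝ) (hDp : IsMoorePenrose D Dp) :
    (fun _ => (1 : ℝ)) ⬝ᵥ (Dp *ᵥ fun _ => (1 : ℝ)) ≠ 0 ↔
    ({x : Fin n → ℝ | D *ᵥ x = 0} = {x : Fin n → ℝ | Dᵀ *ᵥ x = 0} ∧
     {x : Fin n → ℝ | D *ᵥ x = 0} =
       {x : Fin n → ℝ | L *ᵥ x = 0 ∧ (fun _ => (1 : ℝ)) ⬝ᵥ x = 0}) := by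
  obtain rfl : D = gedm a b L := Matrix.ext hD
  simp only [← Pi.one_def] at hL1 ⊢
  have hsymm : L.IsSymm := hL.1
  have hL1' : 1 ᵥ* L = 0 := by rw [← mulVec_transpose, hsymm.eq, hL1]
  have hτ : 0 < L.trace := hL.trace_nonneg.lt_of_ne' (hL.trace_eq_zero_iff.not.mpr hL0)
  have hker := gedm_mulVec_eq_zero_iff hL hL1' hτ ha hb
  have hkerT : ∀ x, (gedm a b L)ᵀ *ᵥ x = 0 ↔ L *ᵥ x = 0 ∧ 1 ⬝ᵥ x = 0 ∧ diag L ⬝ᵥ x = 0 := by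
    rw [gedm_transpose hsymm]
    exact gedm_mulVec_eq_zero_iff hL hL1' hτ hb ha
  constructor
  · intro h
    refine ⟨Set.ext fun x => (hker x).trans (hkerT x).symm, Set.ext fun x => ?_⟩
    simp only [Set.mem_ofPred_eq, hker]
    refine ⟨fun ⟨hLx, hS, _⟩ => ⟨hLx, hS⟩, fun ⟨hLx, hS⟩ => ⟨hLx, hS, ?_⟩⟩
    by_contra hT
    exact h (hDp.one_dotProduct_mulVec_one_eq_zero_of_gedm hsymm ha.ne' hb.ne' hLx hS hT)
  · rintro ⟨hEP, hnull⟩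
    have hn : n ≠ 0 := by
      rintro rfl
      simp [trace] at hτ
    exact hDp.one_dotProduct_mulVec_one_ne_zero_of_gedm hL ha hb hn
      (fun x hx => (Set.ext_iff.mp hEP x).mpr hx) (fun x => Set.ext_iff.mp hnull x)
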